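/- Let Λ = ⟨x, y | x³ = y³ = e⟩ be the free product ℤ/3 * ℤ/3. The assignment a ↦ xyx⁻¹, b ↦ x defines a homomorphism ρ from G = ⟨a,b | a³B²abA³b²AB⟩ (with A = a⁻¹, B = b⁻¹) to Λ (i.e., the relator maps to the identity), and ρ is surjective. -/

import Mathlib

/-! The relator a³B²abA³b²AB is trivial in every group in which a³ = b³ = 1, and both
xyx⁻¹ and x have order dividing 3 in Λ, so the assignment respects the relation. The image
contains x = ρ(b) and y = ρ(b⁻¹ab), hence all of Λ. -/

namespace Stmt18

def a : FreeGroup (Fin 2) := FreeGroup.of 0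
def b : FreeGroup (Fin 2) := FreeGroup.of 1

/-- relator a³B²abA³b²AB of π₁(m129), the Whitehead link complement -/
def m129Rels : Set (FreeGroup (Fin 2)) :=
  {a ^ 3 * b⁻¹ ^ 2 * a * b * a⁻¹ ^ 3 * b ^ 2 * a⁻¹ * b⁻¹}

def x : FreeGroup (Fin 2) := FreeGroup.of 0
def y : FreeGroup (Fin 2) := FreeGroup.of 1

/-- relators of Λ₂(3,3,∞) = ⟨x,y | x³ = y³ = e⟩ ≅ ℤ/3 * ℤ/3 -/
def lambdaRels : Set (FreeGroup (Fin 2)) := {x ^ 3, y ^ 3}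

theorem m129_relator_eq_one {G : Type*} [Group G] {g h : G} (hg : g ^ 3 = 1) (hh : h ^ 3 = 1) :
    g ^ 3 * h⁻¹ ^ 2 * g * h * g⁻¹ ^ 3 * h ^ 2 * g⁻¹ * h⁻¹ = 1 := by
  calc g ^ 3 * h⁻¹ ^ 2 * g * h * g⁻¹ ^ 3 * h ^ 2 * g⁻¹ * h⁻¹
      = g ^ 3 * h⁻¹ ^ 2 * g * h * (g ^ 3)⁻¹ * h ^ 2 * g⁻¹ * h⁻¹ := by group
    _ = h⁻¹ ^ 2 * g * h ^ 3 * g⁻¹ * h⁻¹ := by rw [hg]; group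
    _ = h⁻¹ ^ 3 := by rw [hh]; group
    _ = 1 := by rw [inv_pow, hh, inv_one]

theorem lift_m129Rels_eq_one {G : Type*} [Group G] (f : Fin 2 → G) (h₀ : f 0 ^ 3 = 1)
    (h₁ : f 1 ^ 3 = 1) : ∀ r ∈ m129Rels, FreeGroup.lift f r = 1 := by
  rintro r rfl
  simpa [a, b] using m129_relator_eq_one h₀ h₁

theorem lambda_of_pow_three (i : Fin 2) :
    (PresentedGroup.of i : PresentedGroup lambdaRels) ^ 3 = 1 := by
  have hmem : FreeGroup.of i ^ 3 ∈ lambdaRels := by fin_cases i <;> simp [lambdaRels, x, y]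
  rw [← PresentedGroup.one_of_mem hmem, map_pow]
  rfl

/-- The assignment a ↦ xyx⁻¹, b ↦ x defines a surjective homomorphism
π₁(m129) → Λ₂(3,3,∞). -/
theorem m129_to_Lambda33inf :
    ∃ ρ : PresentedGroup m129Rels →* PresentedGroup lambdaRels,
      ρ (PresentedGroup.of 0) =
        PresentedGroup.of 0 * PresentedGroup.of 1 * (PresentedGroup.of 0)⁻¹ ∧
      ρ (PresentedGroup.of 1) = PresentedGroup.of 0 ∧
      Function.Surjective ρ := by
  set X : PresentedGroup lambdaRels := PresentedGroup.of 0
  set Y : PresentedGroup lambdaRels := PresentedGroup.of 1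
  have hrels : ∀ r ∈ m129Rels, FreeGroup.lift ![X * Y * X⁻¹, X] r = 1 :=
    lift_m129Rels_eq_one _ (by simp [conj_pow, Y, lambda_of_pow_three]) (lambda_of_pow_three 0)
  set ρ := PresentedGroup.toGroup hrels
  have hρa : ρ (PresentedGroup.of 0) = X * Y * X⁻¹ := PresentedGroup.toGroup.of hrels
  have hρb : ρ (PresentedGroup.of 1) = X := PresentedGroup.toGroup.of hrels
  refine ⟨ρ, hρa, hρb, fun g => PresentedGroup.generated_by _ ρ.range (fun i => ?_) g⟩
  fin_cases i
  · exact ⟨PresentedGroup.of 1, hρb⟩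
  · refine ⟨(PresentedGroup.of 1)⁻¹ * PresentedGroup.of 0 * PresentedGroup.of 1, ?_⟩
    simp only [map_mul, map_inv, hρa, hρb]
    group
    rfl

end Stmt18
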